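/- arXiv:1304.1681 — 7 statements merged into one kernel-verified Lean document; each statement's English description precedes it below -/
import Mathlib

section
/- Every point of I = (0,1]×{0} is an inaccessible boundary point of Ψ: for every a ∈ (0,1] there is no continuous map γ : [0,1] → ℝ² with γ(1) = (a,0) and γ([0,1)) ⊆ Ψ. -/
noncomputable section
open Set Metric Filter Topology

abbrev E2 := EuclideanSpace ℝ (Fin 2)
abbrev E3 := EuclideanSpace ℝ (Fin 3)

/-- The point (a,b) in the Euclidean plane. -/
def pt (a b : ℝ) : E2 := (WithLp.equiv 2 (Fin 2 → ℝ)).symm ![a, b]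
def pt3 (a b c : ℝ) : E3 := (WithLp.equiv 2 (Fin 3 → ℝ)).symm ![a, b, c]

/-- The topologist's comb. -/
def Psi : Set E2 :=
  {x : E2 | x 0 ∈ Ioo (-1 : ℝ) 1 ∧ x 1 ∈ Ioo (0 : ℝ) 2} \
    ⋃ j : ℕ, {x : E2 | x 0 ∈ Icc (0 : ℝ) 1 ∧ x 1 = 2 ^ (-(j : ℤ))}

def theta (j : ℕ) : ℝ := 2 ^ (-(j : ℤ))
/-- For t ∈ (2^{-j}, 2^{1-j}), jIdx t = j. -/
def jIdx (t : ℝ) : ℕ := ⌈-Real.logb 2 t⌉₊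

/-- The folding map into ℝ³ used to define the extended metric. -/
def F (x : E2) : E3 :=
  if x 0 ≤ 0 then pt3 (x 0) (x 1) 0
  else pt3 (x 0 * Real.cos (theta (jIdx (x 1)))) (x 1) (x 0 * Real.sin (theta (jIdx (x 1))))

def distExt (x y : E2) : ℝ := dist (F x) (F y)

/-- The Mazurkiewicz distance on the comb. -/
def dM (x y : E2) : ℝ :=
  sInf {d : ℝ | ∃ E : Set E2, E ⊆ Psi ∧ IsConnected E ∧ x ∈ E ∧ y ∈ E ∧ d = Metric.diam E}

/-! The tail of a path ending at `(a, 0)` with `a > 0` stays in the right half-plane, while its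
height must pass through every small value, in particular through some `2 ^ (-j)`: at that moment
the path lies on the tooth `[0, 1] × {2 ^ (-j)}`, which is not part of `Psi`. -/

@[simp]
lemma pt_apply_zero (a b : ℝ) : pt a b 0 = a := rfl

@[simp]
lemma pt_apply_one (a b : ℝ) : pt a b 1 = b := rfl

lemma exists_two_zpow_neg_lt {c : ℝ} (hc : 0 < c) : ∃ j : ℕ, (2 : ℝ) ^ (-(j : ℤ)) < c := by
  obtain ⟨j, hj⟩ := exists_pow_lt_of_lt_one hc (by norm_num : (2⁻¹ : ℝ) < 1)
  exact ⟨j, by rwa [zpow_neg, zpow_natCast, ← inv_pow]⟩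

lemma snd_pos_of_mem_Psi {x : E2} (hx : x ∈ Psi) : 0 < x 1 := hx.1.2.1

lemma snd_ne_two_zpow_neg_of_mem_Psi {x : E2} (hx : x ∈ Psi) (h0 : 0 ≤ x 0) (j : ℕ) :
    x 1 ≠ 2 ^ (-(j : ℤ)) := fun hj =>
  hx.2 (mem_iUnion.mpr ⟨j, ⟨h0, hx.1.1.2.le⟩, hj⟩)

lemma exists_mem_Ico_not_mem_Psi {δ : ℝ → E2} (hδ : Continuous δ) (h0 : 0 < δ 1 0)
    (h1 : δ 1 1 = 0) : ∃ t ∈ Ico (0 : ℝ) 1, δ t ∉ Psi := by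
  by_contra! hΨ
  have hcoord (i : Fin 2) : Continuous fun t => δ t i := (PiLp.continuous_apply 2 _ i).comp hδ
  have hpos : {t : ℝ | 0 < δ t 0} ∈ 𝓝 (1 : ℝ) :=
    (hcoord 0).continuousAt.preimage_mem_nhds (Ioi_mem_nhds h0)
  obtain ⟨l, hl, hlpos⟩ := exists_Ioc_subset_of_mem_nhds' hpos zero_lt_one
  obtain ⟨j, hj⟩ := exists_two_zpow_neg_lt (snd_pos_of_mem_Psi (hΨ l hl))
  obtain ⟨t, ht, htj⟩ := intermediate_value_Ioo' hl.2.le (hcoord 1).continuousOn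
    (show (2 : ℝ) ^ (-(j : ℤ)) ∈ Ioo (δ 1 1) (δ l 1) from ⟨h1 ▸ by positivity, hj⟩)
  exact snd_ne_two_zpow_neg_of_mem_Psi (hΨ t ⟨hl.1.trans ht.1.le, ht.2⟩)
    (hlpos (Ioo_subset_Ioc_self ht)).le j htj

theorem comb_inaccessible (a : ℝ) (ha : a ∈ Ioc (0 : ℝ) 1) :
    ¬ ∃ γ : Set.Icc (0 : ℝ) 1 → E2, Continuous γ ∧ γ ⟨1, by norm_num⟩ = pt a 0 ∧
      ∀ t : Set.Icc (0 : ℝ) 1, (t : ℝ) < 1 → γ t ∈ Psi := by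
  rintro ⟨γ, hγ, hγ1, hγΨ⟩
  have hend : IccExtend zero_le_one γ 1 = pt a 0 := by rw [IccExtend_right]; exact hγ1
  obtain ⟨t, ht, hnot⟩ := exists_mem_Ico_not_mem_Psi (hγ.Icc_extend' (h := zero_le_one))
    (by rw [hend, pt_apply_zero]; exact ha.1) (by rw [hend, pt_apply_one])
  rw [IccExtend_of_mem _ _ (Ico_subset_Icc_self ht)] at hnot
  exact hnot (hγΨ _ ht.2)
end
end

section
/- Every point of ∂Ψ \ I is an accessible boundary point of Ψ: for every x₀ ∈ ∂Ψ with x₀ ∉ (0,1]×{0} there is a continuous map γ : [0,1] → ℝ² with γ(1) = x₀ and γ([0,1)) ⊆ Ψ. -/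
noncomputable section
open Set Metric Filter Topology

/-!
Each such `x₀` is reached by a straight segment aimed at an interior point `(-1/2, c)` of the
rectangle with `c ≠ x₀ 1`. If `x₀ 0 ≤ 0` the segment runs in the half-plane `x < 0`, which no
tooth meets. Otherwise `x₀ 1 > 0`, the height along the segment differs from `x₀ 1`, and the
tooth heights `2^{-j}` accumulate only at `0`, so a short enough piece of the segment misses
every tooth.
-/

lemma exists_path_of_eventually_mem {V : Type*} [AddCommGroup V] [Module ℝ V]
    [TopologicalSpace V] [ContinuousAdd V] [ContinuousSMul ℝ V] {U : Set V} {x₀ v : V}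
    (h : ∀ᶠ s in 𝓝[>] (0 : ℝ), x₀ + s • v ∈ U) :
    ∃ γ : Set.Icc (0 : ℝ) 1 → V, Continuous γ ∧ γ ⟨1, by norm_num⟩ = x₀ ∧
      ∀ t : Set.Icc (0 : ℝ) 1, (t : ℝ) < 1 → γ t ∈ U := by
  obtain ⟨s₀, hs₀ : 0 < s₀, hU⟩ := mem_nhdsGT_iff_exists_Ioc_subset.1 h
  refine ⟨fun t => x₀ + ((1 - (t : ℝ)) * s₀) • v, by fun_prop, by simp,
    fun t ht => hU ?_⟩
  have ht0 : 0 ≤ (t : ℝ) := t.2.1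
  constructor <;> nlinarith

lemma eventually_ne_two_zpow_neg {b : ℝ} (hb : 0 < b) :
    ∀ᶠ y in 𝓝[≠] b, ∀ j : ℕ, y ≠ 2 ^ (-(j : ℤ)) := by
  obtain ⟨N, hN⟩ : ∃ N : ℕ, (2 : ℝ) ^ (-(N : ℤ)) < b := by
    obtain ⟨N, hN⟩ := exists_pow_lt_of_lt_one hb (by norm_num : (1 / 2 : ℝ) < 1)
    exact ⟨N, by simpa [zpow_neg, inv_pow] using hN⟩
  have h_low : ∀ᶠ y in 𝓝[≠] b, ∀ j, N ≤ j → y ≠ 2 ^ (-(j : ℤ)) := by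
    filter_upwards [nhdsWithin_le_nhds (eventually_gt_nhds hN)] with y hy j hj
    exact ((zpow_le_zpow_right₀ one_le_two (by simpa using hj)).trans_lt hy).ne'
  have h_high : ∀ᶠ y in 𝓝[≠] b, ∀ j ∈ Iio N, y ≠ 2 ^ (-(j : ℤ)) := by
    refine (finite_Iio N).eventually_all.2 fun j _ => ?_
    by_cases hj : b = 2 ^ (-(j : ℤ))
    · exact hj ▸ self_mem_nhdsWithin
    · exact eventually_ne_nhdsWithin hj
  filter_upwards [h_low, h_high] with y h_low h_high j
  exact (lt_or_ge j N).elim (h_high j) (h_low j)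

lemma add_mul_sub_mem_Ioo {l u a c s : ℝ} (ha : a ∈ Icc l u) (hc : c ∈ Ioo l u)
    (hs : s ∈ Ioc 0 1) : a + s * (c - a) ∈ Ioo l u := by
  obtain ⟨hla, hau⟩ := ha
  obtain ⟨hlc, hcu⟩ := hc
  obtain ⟨hs0, hs1⟩ := hs
  constructor <;> nlinarith

lemma mem_Psi_iff (x : E2) : x ∈ Psi ↔
    (x 0 ∈ Ioo (-1 : ℝ) 1 ∧ x 1 ∈ Ioo (0 : ℝ) 2) ∧
      ∀ j : ℕ, ¬(x 0 ∈ Icc (0 : ℝ) 1 ∧ x 1 = 2 ^ (-(j : ℤ))) := by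
  simp only [Psi, Set.mem_sdiff, mem_iUnion, mem_ofPred_eq, not_exists]

lemma closure_Psi_subset :
    closure Psi ⊆ {x : E2 | x 0 ∈ Icc (-1 : ℝ) 1 ∧ x 1 ∈ Icc (0 : ℝ) 2} :=
  closure_minimal
    (fun x hx => ((mem_Psi_iff x).1 hx).1.imp (Ioo_subset_Icc_self ·) (Ioo_subset_Icc_self ·))
    ((isClosed_Icc.preimage (by fun_prop)).inter (isClosed_Icc.preimage (by fun_prop)))

theorem comb_accessible (x₀ : E2) (hx : x₀ ∈ frontier Psi)
    (hxI : ¬ (x₀ 0 ∈ Ioc (0 : ℝ) 1 ∧ x₀ 1 = 0)) :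
    ∃ γ : Set.Icc (0 : ℝ) 1 → E2, Continuous γ ∧ γ ⟨1, by norm_num⟩ = x₀ ∧
      ∀ t : Set.Icc (0 : ℝ) 1, (t : ℝ) < 1 → γ t ∈ Psi := by
  obtain ⟨ha, hb⟩ := closure_Psi_subset (frontier_subset_closure hx)
  obtain ⟨c, hc, hcb⟩ : ∃ c ∈ Ioo (0 : ℝ) 2, c ≠ x₀ 1 := by
    by_cases hb1 : x₀ 1 = 1
    · exact ⟨1 / 2, by norm_num, by rw [hb1]; norm_num⟩
    · exact ⟨1, by norm_num, Ne.symm hb1⟩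
  refine exists_path_of_eventually_mem (v := pt (-1 / 2) c - x₀) ?_
  have hcoord : ∀ s : ℝ,
      (x₀ + s • (pt (-1 / 2) c - x₀)) 0 = x₀ 0 + s * (-1 / 2 - x₀ 0) ∧
      (x₀ + s • (pt (-1 / 2) c - x₀)) 1 = x₀ 1 + s * (c - x₀ 1) := fun s => by simp [pt]
  simp only [mem_Psi_iff, hcoord]
  refine (Eventually.and (Ioc_mem_nhdsGT one_pos) ?_).mono fun s hs =>
    ⟨⟨add_mul_sub_mem_Ioo ha (by norm_num) hs.1, add_mul_sub_mem_Ioo hb hc hs.1⟩, hs.2⟩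
  by_cases ha0 : x₀ 0 ≤ 0
  · filter_upwards [Ioc_mem_nhdsGT one_pos] with s hs j hj
    nlinarith [hj.1.1, hs.1, hs.2]
  · have hb0 : 0 < x₀ 1 :=
      hb.1.lt_of_ne fun h => hxI ⟨⟨not_le.1 ha0, ha.2⟩, h.symm⟩
    have hy : Tendsto (fun s => x₀ 1 + s * (c - x₀ 1)) (𝓝[>] 0) (𝓝[≠] x₀ 1) := by
      refine tendsto_nhdsWithin_of_tendsto_nhds_of_eventually_within _ ?_ ?_
      · have hcont : Continuous fun s : ℝ => x₀ 1 + s * (c - x₀ 1) := by fun_prop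
        exact (hcont.tendsto' 0 _ (by simp)).mono_left nhdsWithin_le_nhds
      · filter_upwards [self_mem_nhdsWithin] with s (hs : 0 < s)
        simpa [sub_eq_zero] using And.intro hs.ne' hcb
    filter_upwards [hy.eventually (eventually_ne_two_zpow_neg hb0)] with s hteeth j hj
    exact hteeth j hj.2
end
end

section
/- Points of a tooth I_j are 'doubled' in the extended metric: for every t ∈ (0,1) and every j ≥ 1, the sequences a_n = (t, 2^{-j} + 4^{-n}) and b_n = (t, 2^{-j} − 4^{-n}) (for n large enough that both lie in Ψ) satisfy lim_{n→∞} dist_Ext(a_n,b_n) = 2t·sin(2^{-j-2}) > 0, although |a_n − b_n| → 0 in the Euclidean metric. -/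
noncomputable section
open Set Metric Filter Topology

/-!
The point `(t, 2^{-j} + ε)` lies in the open band `(2^{-j}, 2^{1-j})` and `(t, 2^{-j} - ε)` in
`(2^{-j-1}, 2^{-j})`, so `F` rotates them by the different angles `θ_j` and `θ_{j+1}` about the
`x₂`-axis. Their images are therefore a chord `2t sin((θ_j - θ_{j+1})/2) = 2t sin 2^{-j-2}` apart
horizontally and `2ε` apart vertically, and only the vertical gap vanishes as `ε → 0`.
-/

lemma jIdx_eq_of_mem_Ioo {m : ℤ} {x : ℝ} (hx : x ∈ Ioo ((2:ℝ) ^ m) (2 ^ (m + 1))) :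
    jIdx x = (-m).toNat := by
  have hx0 : 0 < x := lt_trans (by positivity) hx.1
  have hlow : (m : ℝ) < Real.logb 2 x := by
    rw [Real.lt_logb_iff_rpow_lt one_lt_two hx0, Real.rpow_intCast]
    exact hx.1
  have hup : Real.logb 2 x < ((m + 1 : ℤ) : ℝ) := by
    rw [Real.logb_lt_iff_lt_rpow one_lt_two hx0, Real.rpow_intCast]
    exact hx.2
  have hceil : ⌈-Real.logb 2 x⌉ = -m := by
    rw [Int.ceil_eq_iff]
    push_cast at hup ⊢
    constructor <;> linarith
  rw [jIdx, ← Int.ceil_toNat, hceil]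

lemma ne_two_zpow_of_mem_Ioo {m : ℤ} {x : ℝ} (hx : x ∈ Ioo ((2:ℝ) ^ m) (2 ^ (m + 1))) (n : ℤ) :
    x ≠ 2 ^ n := by
  rintro rfl
  have h₁ := (zpow_lt_zpow_iff_right₀ one_lt_two).mp hx.1
  have h₂ := (zpow_lt_zpow_iff_right₀ one_lt_two).mp hx.2
  omega

lemma pt_mem_Psi {a x : ℝ} (ha : a ∈ Ioo (-1) 1) {m : ℤ} (hm : m ≤ 0)
    (hx : x ∈ Ioo ((2:ℝ) ^ m) (2 ^ (m + 1))) : pt a x ∈ Psi := by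
  have hx2 : x < 2 :=
    hx.2.trans_le (by simpa using zpow_le_zpow_right₀ one_le_two (by omega : m + 1 ≤ 1))
  refine ⟨⟨ha, lt_trans (by positivity) hx.1, hx2⟩, ?_⟩
  simp only [mem_iUnion, mem_ofPred_eq, not_exists, not_and]
  exact fun k _ => ne_two_zpow_of_mem_Ioo hx _

lemma two_zpow_add_mem_Ioo (m : ℤ) {ε : ℝ} (h0 : 0 < ε) (h : ε < 2 ^ m) :
    2 ^ m + ε ∈ Ioo ((2:ℝ) ^ m) (2 ^ (m + 1)) := by
  rw [zpow_add_one₀ two_ne_zero]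
  constructor <;> linarith

lemma two_zpow_sub_mem_Ioo (m : ℤ) {ε : ℝ} (h0 : 0 < ε) (h : ε < 2 ^ m / 2) :
    2 ^ m - ε ∈ Ioo ((2:ℝ) ^ (m - 1)) (2 ^ (m - 1 + 1)) := by
  rw [sub_add_cancel, zpow_sub_one₀ two_ne_zero]
  constructor <;> linarith

lemma dist_pt_pt_left (a b b' : ℝ) : dist (pt a b) (pt a b') = dist b b' := by
  rw [EuclideanSpace.dist_eq, Fin.sum_univ_two]
  simp [pt, Real.dist_eq, Real.sqrt_sq_eq_abs]

lemma dist_pt3 (a b c a' b' c' : ℝ) :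
    dist (pt3 a b c) (pt3 a' b' c') = Real.sqrt ((a - a') ^ 2 + (b - b') ^ 2 + (c - c') ^ 2) := by
  rw [EuclideanSpace.dist_eq, Fin.sum_univ_three]
  simp [pt3, Real.dist_eq, sq_abs]

lemma chord_sq (r α β : ℝ) :
    (r * Real.cos α - r * Real.cos β) ^ 2 + (r * Real.sin α - r * Real.sin β) ^ 2
      = (2 * r * Real.sin ((α - β) / 2)) ^ 2 := by
  rw [← mul_sub, ← mul_sub, Real.cos_sub_cos, Real.sin_sub_sin]
  linear_combination (2 * r * Real.sin ((α - β) / 2)) ^ 2 * Real.sin_sq_add_cos_sq ((α + β) / 2)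

lemma F_pt_of_pos {a : ℝ} (ha : 0 < a) (b : ℝ) :
    F (pt a b) = pt3 (a * Real.cos (theta (jIdx b))) b (a * Real.sin (theta (jIdx b))) :=
  if_neg (not_le.mpr ha)

lemma distExt_pt_pt_of_pos {a : ℝ} (ha : 0 < a) (b b' : ℝ) :
    distExt (pt a b) (pt a b') = Real.sqrt
      ((2 * a * Real.sin ((theta (jIdx b) - theta (jIdx b')) / 2)) ^ 2 + (b - b') ^ 2) := by
  rw [distExt, F_pt_of_pos ha, F_pt_of_pos ha, dist_pt3, ← chord_sq]
  ring_nf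

lemma theta_sub_theta_succ_div_two (j : ℕ) :
    (theta j - theta (j + 1)) / 2 = 2 ^ (-(j:ℤ) - 2) := by
  simp only [theta, Nat.cast_succ, neg_add, zpow_sub₀ (two_ne_zero' ℝ), zpow_add₀ (two_ne_zero' ℝ)]
  ring

lemma distExt_tooth_pair {t ε : ℝ} (ht : 0 < t) (j : ℕ) (h0 : 0 < ε)
    (h : ε < 2 ^ (-(j:ℤ)) / 2) :
    distExt (pt t (2 ^ (-(j:ℤ)) + ε)) (pt t (2 ^ (-(j:ℤ)) - ε))
      = Real.sqrt ((2 * t * Real.sin (2 ^ (-(j:ℤ) - 2))) ^ 2 + (2 * ε) ^ 2) := by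
  have hj : jIdx (2 ^ (-(j:ℤ)) + ε) = j := by
    rw [jIdx_eq_of_mem_Ioo (two_zpow_add_mem_Ioo _ h0 (by linarith)), neg_neg, Int.toNat_natCast]
  have hj' : jIdx (2 ^ (-(j:ℤ)) - ε) = j + 1 := by
    rw [jIdx_eq_of_mem_Ioo (two_zpow_sub_mem_Ioo _ h0 h)]
    omega
  rw [distExt_pt_pt_of_pos ht, hj, hj', theta_sub_theta_succ_div_two]
  ring_nf

lemma tendsto_zpow_neg_atTop_nhds_zero {a : ℝ} (ha : 1 < a) :
    Tendsto (fun n : ℤ => a ^ (-n)) atTop (𝓝 0) := by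
  have h : Tendsto (fun n : ℤ => a ^ n) atTop atTop :=
    (zpow_right_strictMono₀ ha).monotone.tendsto_atTop_atTop fun b =>
      let ⟨n, hn⟩ := pow_unbounded_of_one_lt b ha
      ⟨n, by simpa using hn.le⟩
  simpa only [zpow_neg, Function.comp_def] using tendsto_inv_atTop_zero.comp h

lemma sin_two_zpow_pos {m : ℤ} (hm : m ≤ 1) : 0 < Real.sin (2 ^ m) :=
  Real.sin_pos_of_pos_of_lt_pi (by positivity)
    ((zpow_le_zpow_right₀ one_le_two hm).trans_lt (by linarith [Real.pi_gt_three]))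

theorem tooth_points_doubled_general (t : ℝ) (ht : t ∈ Ioo (0 : ℝ) 1) (j : ℕ) :
    (∀ᶠ n in atTop, pt t ((2:ℝ) ^ (-(j:ℤ)) + (4:ℝ) ^ (-(n:ℤ))) ∈ Psi ∧
        pt t ((2:ℝ) ^ (-(j:ℤ)) - (4:ℝ) ^ (-(n:ℤ))) ∈ Psi) ∧
    Tendsto (fun n : ℕ => distExt (pt t ((2:ℝ) ^ (-(j:ℤ)) + (4:ℝ) ^ (-(n:ℤ))))
        (pt t ((2:ℝ) ^ (-(j:ℤ)) - (4:ℝ) ^ (-(n:ℤ))))) atTop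
      (𝓝 (2 * t * Real.sin ((2:ℝ) ^ (-(j:ℤ) - 2)))) ∧
    0 < 2 * t * Real.sin ((2:ℝ) ^ (-(j:ℤ) - 2)) ∧
    Tendsto (fun n : ℕ => dist (pt t ((2:ℝ) ^ (-(j:ℤ)) + (4:ℝ) ^ (-(n:ℤ))))
        (pt t ((2:ℝ) ^ (-(j:ℤ)) - (4:ℝ) ^ (-(n:ℤ))))) atTop (𝓝 0) := by
  obtain ⟨ht₀, ht₁⟩ := ht
  set τ : ℝ := 2 ^ (-(j:ℤ))
  have hτ : 0 < τ := by positivity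
  have hε : Tendsto (fun n : ℤ => (4:ℝ) ^ (-n)) atTop (𝓝 0) :=
    tendsto_zpow_neg_atTop_nhds_zero (by norm_num)
  have hsmall : ∀ᶠ n : ℤ in atTop, (4:ℝ) ^ (-n) < τ / 2 := hε.eventually (gt_mem_nhds (half_pos hτ))
  have hεℕ := hε.comp tendsto_natCast_atTop_atTop
  have hsmallℕ := tendsto_natCast_atTop_atTop.eventually hsmall
  have hlim : 0 < 2 * t * Real.sin ((2:ℝ) ^ (-(j:ℤ) - 2)) :=
    mul_pos (by positivity) (sin_two_zpow_pos (by omega))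
  refine ⟨?_, ?_, hlim, ?_⟩
  · have ht : t ∈ Ioo (-1) 1 := ⟨by linarith, ht₁⟩
    -- the unannotated `n` of the first conjunct elaborates as an integer
    filter_upwards [hsmall] with n hn
    exact ⟨pt_mem_Psi ht (by omega) (two_zpow_add_mem_Ioo _ (by positivity) (by linarith)),
      pt_mem_Psi ht (by omega) (two_zpow_sub_mem_Ioo _ (by positivity) hn)⟩
  · have hsqrt := ((tendsto_const_nhds (x := (2 * t * Real.sin ((2:ℝ) ^ (-(j:ℤ) - 2))) ^ 2)).add
      ((hεℕ.const_mul 2).pow 2)).sqrt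
    rw [mul_zero, zero_pow two_ne_zero, add_zero, Real.sqrt_sq hlim.le] at hsqrt
    refine hsqrt.congr' ?_
    filter_upwards [hsmallℕ] with n hn
    exact (distExt_tooth_pair ht₀ j (by positivity) hn).symm
  · simp only [dist_pt_pt_left]
    simpa using ((tendsto_const_nhds (x := τ)).add hεℕ).dist ((tendsto_const_nhds (x := τ)).sub hεℕ)

theorem tooth_points_doubled (t : ℝ) (ht : t ∈ Ioo (0 : ℝ) 1) (j : ℕ) (hj : 1 ≤ j) :
    (∀ᶠ n in atTop, pt t ((2:ℝ) ^ (-(j:ℤ)) + (4:ℝ) ^ (-(n:ℤ))) ∈ Psi ∧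
        pt t ((2:ℝ) ^ (-(j:ℤ)) - (4:ℝ) ^ (-(n:ℤ))) ∈ Psi) ∧
    Tendsto (fun n : ℕ => distExt (pt t ((2:ℝ) ^ (-(j:ℤ)) + (4:ℝ) ^ (-(n:ℤ))))
        (pt t ((2:ℝ) ^ (-(j:ℤ)) - (4:ℝ) ^ (-(n:ℤ))))) atTop
      (𝓝 (2 * t * Real.sin ((2:ℝ) ^ (-(j:ℤ) - 2)))) ∧
    0 < 2 * t * Real.sin ((2:ℝ) ^ (-(j:ℤ) - 2)) ∧
    Tendsto (fun n : ℕ => dist (pt t ((2:ℝ) ^ (-(j:ℤ)) + (4:ℝ) ^ (-(n:ℤ))))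
        (pt t ((2:ℝ) ^ (-(j:ℤ)) - (4:ℝ) ^ (-(n:ℤ))))) atTop (𝓝 0) :=
  tooth_points_doubled_general t ht j
end
end

section
/- For every t ∈ (0,1), the sequence q_n = (t, 3·2^{-n-1}) of points of Ψ is a Cauchy sequence with respect to dist_Ext, and it converges in the Euclidean metric to the inaccessible boundary point (t,0) ∈ I. -/
noncomputable section
open Set Metric Filter Topology

/-!
The point `q_n = (t, 3·2^{-n-1})` lies in the strip `2^{-n} < x₂ < 2^{1-n}` (as `1 < 3/2 < 2`),
where `F` rotates the half-plane `x₁ > 0` by the angle `θ_n = 2^{-n}`. Hence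
`F(q_n) = (t cos θ_n, 3·2^{-n-1}, t sin θ_n) → (t, 0, 0)`, so `(F(q_n))` is Cauchy in `ℝ³`, which is
the Cauchy property for `dist_Ext`. The heights avoid the teeth `x₂ = 2^{-j}` since 3 is not a
power of 2.
-/

lemma three_mul_two_zpow_ne_two_zpow (a b : ℤ) : (3:ℝ) * 2 ^ a ≠ 2 ^ b := by
  intro h
  have h3 : (3:ℝ) = 2 ^ (b - a) := by
    rw [zpow_sub₀ two_ne_zero, ← h]; field_simp
  rcases le_or_gt (b - a) 1 with hle | hgt
  · have : (2:ℝ) ^ (b - a) ≤ 2 ^ (1:ℤ) := zpow_le_zpow_right₀ one_le_two hle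
    norm_num [← h3] at this
  · have : (2:ℝ) ^ (2:ℤ) ≤ 2 ^ (b - a) := zpow_le_zpow_right₀ one_le_two hgt
    norm_num [← h3] at this

lemma jIdx_eq_of_mem_Ico {j : ℕ} {y : ℝ}
    (hy : y ∈ Ico ((2:ℝ) ^ (-(j:ℤ))) (2 ^ (1 - (j:ℤ)))) : jIdx y = j := by
  have hy0 : 0 < y := (zpow_pos two_pos _).trans_le hy.1
  have hlow : ((-(j:ℤ) : ℤ) : ℝ) ≤ Real.logb 2 y := by
    rw [Real.le_logb_iff_rpow_le one_lt_two hy0, Real.rpow_intCast]; exact hy.1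
  have hup : Real.logb 2 y < ((1 - (j:ℤ) : ℤ) : ℝ) := by
    rw [Real.logb_lt_iff_lt_rpow one_lt_two hy0, Real.rpow_intCast]; exact hy.2
  push_cast at hlow hup
  rw [jIdx, ← Int.ceil_toNat,
    Int.ceil_eq_iff (z := (j:ℤ)) |>.2 ⟨by push_cast; linarith, by push_cast; linarith⟩,
    Int.toNat_natCast]

lemma three_mul_two_zpow_mem_Ico (n : ℤ) :
    (3:ℝ) * 2 ^ (-n - 1) ∈ Ico ((2:ℝ) ^ (-n)) (2 ^ (1 - n)) := by
  have h1 : (2:ℝ) ^ (-n - 1) = 2 ^ (-n) / 2 := by rw [zpow_sub₀ two_ne_zero, zpow_one]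
  have h2 : (2:ℝ) ^ (1 - n) = 2 * 2 ^ (-n) := by rw [sub_eq_add_neg, zpow_add₀ two_ne_zero, zpow_one]
  have := zpow_pos (two_pos : (0:ℝ) < 2) (-n)
  rw [h1, h2]; constructor <;> linarith

lemma tendsto_pt3 {α : Type*} {l : Filter α} {a b c : α → ℝ} {a₀ b₀ c₀ : ℝ}
    (ha : Tendsto a l (𝓝 a₀)) (hb : Tendsto b l (𝓝 b₀)) (hc : Tendsto c l (𝓝 c₀)) :
    Tendsto (fun x => pt3 (a x) (b x) (c x)) l (𝓝 (pt3 a₀ b₀ c₀)) :=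
  (PiLp.continuous_toLp 2 _).continuousAt.tendsto.comp <|
    tendsto_pi_nhds.2 fun i => by fin_cases i <;> assumption

lemma tendsto_pt {α : Type*} {l : Filter α} {a b : α → ℝ} {a₀ b₀ : ℝ}
    (ha : Tendsto a l (𝓝 a₀)) (hb : Tendsto b l (𝓝 b₀)) :
    Tendsto (fun x => pt (a x) (b x)) l (𝓝 (pt a₀ b₀)) :=
  (PiLp.continuous_toLp 2 _).continuousAt.tendsto.comp <|
    tendsto_pi_nhds.2 fun i => by fin_cases i <;> assumption

lemma tendsto_two_zpow_neg_natCast : Tendsto (fun n : ℕ => (2:ℝ) ^ (-(n:ℤ))) atTop (𝓝 0) := by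
  simpa only [zpow_neg, zpow_natCast, ← inv_pow] using
    tendsto_pow_atTop_nhds_zero_of_lt_one (by norm_num : (0:ℝ) ≤ 2⁻¹) (by norm_num)

lemma tendsto_three_mul_two_zpow : Tendsto (fun n : ℕ => (3:ℝ) * 2 ^ (-(n:ℤ) - 1)) atTop (𝓝 0) := by
  have h := tendsto_two_zpow_neg_natCast.const_mul (3 / 2 : ℝ)
  rw [mul_zero] at h
  refine h.congr fun n => ?_
  rw [zpow_sub₀ two_ne_zero, zpow_one]; ring

lemma pt_mem_Psi_s8 {a b : ℝ} (ha : a ∈ Ioo (-1:ℝ) 1) (hb : b ∈ Ioo (0:ℝ) 2)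
    (hb_teeth : ∀ j : ℕ, b ≠ 2 ^ (-(j:ℤ))) : pt a b ∈ Psi :=
  ⟨⟨ha, hb⟩, by simp only [mem_iUnion, not_exists]; exact fun j hj => hb_teeth j hj.2⟩

lemma pt_three_mul_two_zpow_mem_Psi {t : ℝ} (ht : t ∈ Ioo (0:ℝ) 1) (n : ℕ) :
    pt t (3 * 2 ^ (-(n:ℤ) - 1)) ∈ Psi := by
  obtain ⟨hlow, hup⟩ := three_mul_two_zpow_mem_Ico n
  have h2 : (2:ℝ) ^ (1 - (n:ℤ)) ≤ 2 ^ (1:ℤ) := zpow_le_zpow_right₀ one_le_two (by omega)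
  refine pt_mem_Psi_s8 ⟨by linarith [ht.1], ht.2⟩ ⟨(zpow_pos two_pos _).trans_le hlow, ?_⟩
    fun j => three_mul_two_zpow_ne_two_zpow _ _
  rw [zpow_one] at h2
  exact hup.trans_le h2

lemma tendsto_F_pt_three_mul_two_zpow {t : ℝ} (ht : 0 < t) :
    Tendsto (fun n : ℕ => F (pt t (3 * 2 ^ (-(n:ℤ) - 1)))) atTop (𝓝 (pt3 t 0 0)) := by
  have hF (n : ℕ) : F (pt t (3 * 2 ^ (-(n:ℤ) - 1))) = pt3 (t * Real.cos (2 ^ (-(n:ℤ))))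
      (3 * 2 ^ (-(n:ℤ) - 1)) (t * Real.sin (2 ^ (-(n:ℤ)))) := by
    rw [F_pt_of_pos ht, jIdx_eq_of_mem_Ico (three_mul_two_zpow_mem_Ico n), theta]
  have hθ := tendsto_two_zpow_neg_natCast
  simp only [hF]
  simpa using tendsto_pt3 (((Real.continuous_cos.tendsto 0).comp hθ).const_mul t)
    tendsto_three_mul_two_zpow (((Real.continuous_sin.tendsto 0).comp hθ).const_mul t)

theorem cauchy_to_inaccessible (t : ℝ) (ht : t ∈ Ioo (0 : ℝ) 1) :
    (∀ n : ℕ, pt t (3 * 2 ^ (-(n:ℤ) - 1)) ∈ Psi) ∧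
    (∀ ε > (0:ℝ), ∃ N : ℕ, ∀ m ≥ N, ∀ n ≥ N,
        distExt (pt t (3 * 2 ^ (-(m:ℤ) - 1))) (pt t (3 * 2 ^ (-(n:ℤ) - 1))) < ε) ∧
    Tendsto (fun n : ℕ => pt t (3 * 2 ^ (-(n:ℤ) - 1))) atTop (𝓝 (pt t 0)) ∧
    pt t 0 ∈ {x : E2 | x 0 ∈ Ioc (0:ℝ) 1 ∧ x 1 = 0} :=
  ⟨pt_three_mul_two_zpow_mem_Psi ht,
    Metric.cauchySeq_iff.1 (tendsto_F_pt_three_mul_two_zpow ht.1).cauchySeq,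
    tendsto_pt tendsto_const_nhds tendsto_three_mul_two_zpow,
    ⟨⟨ht.1, ht.2.le⟩, rfl⟩⟩
end
end

section
/- The identity map (Ψ, d_M) → (Ψ, Euclidean metric) is a homeomorphism: the Mazurkiewicz metric d_M induces the same topology on Ψ as the Euclidean metric. -/
noncomputable section
open Set Metric Filter Topology

/-! The teeth accumulate only on `[0,1] × {0}`, outside the open rectangle, so `Psi` is open: a
small Euclidean ball around `x` lies in `Psi` and, being connected, bounds `dM x y` by its diameter.
Conversely every admissible connected set contains `x` and `y`, so `dist x y ≤ dM x y`; this needs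
`Psi` bounded (the diameter of an unbounded set is `0` in Mathlib) and connected (otherwise `dM` is
the infimum of the empty set, again `0`). -/

lemma tendsto_two_zpow_neg_atTop : Tendsto (fun j : ℕ => (2 : ℝ) ^ (-(j : ℤ))) atTop (𝓝 0) := by
  simpa [zpow_neg, zpow_natCast, ← inv_pow] using
    tendsto_pow_atTop_nhds_zero_of_lt_one (r := (2 : ℝ)⁻¹) (by norm_num) (by norm_num)

lemma isOpen_Psi : IsOpen Psi := by
  have hR : IsOpen {x : E2 | x 0 ∈ Ioo (-1 : ℝ) 1 ∧ x 1 ∈ Ioo (0 : ℝ) 2} :=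
    (isOpen_Ioo.preimage (by fun_prop)).inter (isOpen_Ioo.preimage (by fun_prop))
  have hK : IsClosed {x : E2 | x 0 ∈ Icc (0 : ℝ) 1 ∧
      x 1 ∈ insert 0 (range fun j : ℕ => (2 : ℝ) ^ (-(j : ℤ)))} :=
    (isClosed_Icc.preimage (by fun_prop)).inter
      (tendsto_two_zpow_neg_atTop.isCompact_insert_range.isClosed.preimage (by fun_prop))
  convert hR.sdiff hK using 1
  ext x
  simp only [Psi, Set.mem_sdiff, mem_iUnion, mem_insert_iff, mem_range, Set.mem_ofPred_eq]
  refine and_congr_right fun hx => ?_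
  have : x 1 ≠ 0 := hx.2.1.ne'
  grind

lemma isBounded_Psi : Bornology.IsBounded Psi := by
  rw [Bornology.isBounded_induced]
  refine (Bornology.IsBounded.pi fun _ => Metric.isBounded_Icc (-1 : ℝ) 2).subset ?_
  rintro _ ⟨x, ⟨⟨⟨h0, h0'⟩, h1, h1'⟩, -⟩, rfl⟩ i -
  fin_cases i <;> simp only [Fin.zero_eta, Fin.mk_one, mem_Icc] <;> constructor <;> linarith

lemma apply_mem_uIcc_of_mem_segment {z w p : E2} (hp : p ∈ segment ℝ z w) (i : Fin 2) :
    p i ∈ uIcc (z i) (w i) := by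
  obtain ⟨a, b, ha, hb, hab, rfl⟩ := hp
  exact segment_eq_uIcc (z i) (w i) ▸ ⟨a, b, ha, hb, hab, rfl⟩

def leftStrip : Set E2 := {x | x 0 ∈ Ioo (-1 : ℝ) 0 ∧ x 1 ∈ Ioo (0 : ℝ) 2}

lemma convex_leftStrip : Convex ℝ leftStrip :=
  ((convex_Ioo _ _).linear_preimage (EuclideanSpace.proj 0 : E2 →L[ℝ] ℝ).toLinearMap).inter
    ((convex_Ioo _ _).linear_preimage (EuclideanSpace.proj 1 : E2 →L[ℝ] ℝ).toLinearMap)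

lemma leftStrip_subset_Psi : leftStrip ⊆ Psi := by
  rintro x ⟨⟨h0, h0'⟩, h1⟩
  refine ⟨⟨⟨h0, by linarith⟩, h1⟩, ?_⟩
  simp only [mem_iUnion, not_exists]
  exact fun j hj => (hj.1.1.trans_lt h0').false

lemma pt_mem_leftStrip {a b : ℝ} (ha : a ∈ Ioo (-1) 0) (hb : b ∈ Ioo 0 2) : pt a b ∈ leftStrip := by
  simpa [leftStrip, pt] using ⟨ha, hb⟩

/-- At the height of a tooth both endpoints lie left of it, hence so does the whole segment. -/
lemma segment_subset_Psi_of_apply_one_eq {z w : E2} (hz : z ∈ Psi) (hw : w ∈ Psi)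
    (h : z 1 = w 1) : segment ℝ z w ⊆ Psi := by
  intro p hp
  have hp0 := apply_mem_uIcc_of_mem_segment hp 0
  have hp1 : p 1 = z 1 := by simpa [← h] using apply_mem_uIcc_of_mem_segment hp 1
  obtain ⟨⟨hz0, hz1⟩, hzT⟩ := hz
  obtain ⟨⟨hw0, -⟩, hwT⟩ := hw
  simp only [mem_iUnion, not_exists, Set.mem_ofPred_eq] at hzT hwT
  refine ⟨⟨ordConnected_Ioo.uIcc_subset hz0 hw0 hp0, hp1 ▸ hz1⟩, ?_⟩
  simp only [mem_iUnion, not_exists, Set.mem_ofPred_eq]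
  rintro j ⟨⟨hp0', -⟩, hj⟩
  have hz0' : z 0 < 0 := lt_of_not_ge fun h0 => hzT j ⟨⟨h0, hz0.2.le⟩, hp1 ▸ hj⟩
  have hw0' : w 0 < 0 := lt_of_not_ge fun h0 => hwT j ⟨⟨h0, hw0.2.le⟩, h ▸ hp1 ▸ hj⟩
  exact (ordConnected_Iio.uIcc_subset hz0' hw0' hp0).not_ge hp0'

lemma isConnected_Psi : IsConnected Psi := by
  have hmid : (-(1 / 2) : ℝ) ∈ Ioo (-1) 0 := by norm_num
  refine ⟨⟨_, leftStrip_subset_Psi (pt_mem_leftStrip hmid (b := 1) (by norm_num))⟩,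
    isPreconnected_of_forall (pt (-(1 / 2)) 1) fun y hy => ?_⟩
  have hy' : pt (-(1 / 2)) (y 1) ∈ leftStrip := pt_mem_leftStrip hmid hy.1.2
  refine ⟨leftStrip ∪ segment ℝ y (pt (-(1 / 2)) (y 1)), union_subset leftStrip_subset_Psi
      (segment_subset_Psi_of_apply_one_eq hy (leftStrip_subset_Psi hy') (by simp [pt])),
    Or.inl (pt_mem_leftStrip hmid (by norm_num)), Or.inr (left_mem_segment ℝ _ _), ?_⟩
  exact convex_leftStrip.isPreconnected.union _ hy' (right_mem_segment ℝ _ _)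
    (convex_segment _ _).isPreconnected

lemma dist_le_dM {x y : E2} (hx : x ∈ Psi) (hy : y ∈ Psi) : dist x y ≤ dM x y := by
  refine le_csInf ⟨_, Psi, subset_rfl, isConnected_Psi, hx, hy, rfl⟩ ?_
  rintro _ ⟨E, hE, -, hxE, hyE, rfl⟩
  exact dist_le_diam_of_mem (isBounded_Psi.subset hE) hxE hyE

lemma dM_le_diam {x y : E2} {E : Set E2} (hE : E ⊆ Psi) (hEc : IsConnected E) (hx : x ∈ E)
    (hy : y ∈ E) : dM x y ≤ diam E := by
  refine csInf_le ⟨0, ?_⟩ ⟨E, hE, hEc, hx, hy, rfl⟩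
  rintro _ ⟨E, -, -, -, -, rfl⟩
  exact diam_nonneg

theorem dM_same_topology (x : E2) (hx : x ∈ Psi) :
    ∀ ε > (0:ℝ), ∃ δ > (0:ℝ),
      (∀ y ∈ Psi, dist x y < δ → dM x y < ε) ∧
      (∀ y ∈ Psi, dM x y < δ → dist x y < ε) := by
  intro ε hε
  obtain ⟨r, hr, hball⟩ := Metric.isOpen_iff.1 isOpen_Psi x hx
  set δ := min r (ε / 3)
  have hδ : 0 < δ := lt_min hr (by positivity)
  have hδε : δ ≤ ε / 3 := min_le_right r _
  refine ⟨δ, hδ, fun y _ hxy => ?_, fun y hy hxy => ?_⟩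
  · calc dM x y ≤ diam (ball x δ) :=
          dM_le_diam ((ball_subset_ball (min_le_left _ _)).trans hball)
            ⟨nonempty_ball.2 hδ, (convex_ball x δ).isPreconnected⟩ (mem_ball_self hδ)
            (mem_ball_comm.1 hxy)
      _ ≤ 2 * δ := diam_ball hδ.le
      _ < ε := by linarith
  · exact (dist_le_dM hx hy).trans_lt (by linarith)
end
end

section
/- Any connected subset E of the comb Ψ containing two points lying in different gaps between teeth must reach the left half of the comb: if x = (x₁,x₂) ∈ E with 2^{-j} < x₂ < 2^{1-j} and x₁ > 0, and y = (y₁,y₂) ∈ E with 2^{-k} < y₂ < 2^{1-k} and y₁ > 0, where j ≠ k, then E contains a point with first coordinate ≤ 0. -/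
noncomputable section
open Set Metric Filter Topology

/-! A connected set meeting two different gaps must cross the height `2^{-j}` of the tooth
separating them (intermediate value theorem for the second coordinate), and the only points
of `Ψ` at that height lie strictly to the left of the tooth. -/

lemma Psi_fst_neg_of_snd_eq {p : E2} (hp : p ∈ Psi) {j : ℕ} (hpj : p 1 = 2 ^ (-(j : ℤ))) :
    p 0 < 0 := by
  by_contra! h
  exact hp.2 (mem_iUnion.2 ⟨j, ⟨h, hp.1.1.2.le⟩, hpj⟩)

lemma lt_zpow_neg_of_lt_zpow_one_sub {j k : ℕ} (hjk : j < k) {t : ℝ}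
    (ht : t < (2 : ℝ) ^ (1 - (k : ℤ))) : t < (2 : ℝ) ^ (-(j : ℤ)) :=
  ht.trans_le (zpow_le_zpow_right₀ one_le_two (by omega))

theorem connected_set_reaches_left_general (E : Set E2) (hE : E ⊆ Psi) (hconn : IsConnected E)
    (j k : ℕ) (hjk : j ≠ k)
    (x : E2) (hxE : x ∈ E)
    (hx1 : x 1 ∈ Ioo ((2:ℝ) ^ (-(j:ℤ))) ((2:ℝ) ^ (1 - (j:ℤ))))
    (y : E2) (hyE : y ∈ E)
    (hy1 : y 1 ∈ Ioo ((2:ℝ) ^ (-(k:ℤ))) ((2:ℝ) ^ (1 - (k:ℤ)))) :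
    ∃ z ∈ E, z 0 ≤ 0 := by
  wlog hlt : j < k generalizing j k x y
  · exact this k j hjk.symm y hyE hy1 x hxE hx1 (hjk.symm.lt_of_le (not_lt.1 hlt))
  have hy_below : y 1 ≤ 2 ^ (-(j : ℤ)) := (lt_zpow_neg_of_lt_zpow_one_sub hlt hy1.2).le
  obtain ⟨z, hzE, hz⟩ := hconn.isPreconnected.intermediate_value hyE hxE
    (f := fun p : E2 => p 1) (by fun_prop) ⟨hy_below, hx1.1.le⟩
  exact ⟨z, hzE, (Psi_fst_neg_of_snd_eq (hE hzE) hz).le⟩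

theorem connected_set_reaches_left (E : Set E2) (hE : E ⊆ Psi) (hconn : IsConnected E)
    (j k : ℕ) (hjk : j ≠ k)
    (x : E2) (hxE : x ∈ E) (hx0 : 0 < x 0)
    (hx1 : x 1 ∈ Ioo ((2:ℝ) ^ (-(j:ℤ))) ((2:ℝ) ^ (1 - (j:ℤ))))
    (y : E2) (hyE : y ∈ E) (hy0 : 0 < y 0)
    (hy1 : y 1 ∈ Ioo ((2:ℝ) ^ (-(k:ℤ))) ((2:ℝ) ^ (1 - (k:ℤ)))) :
    ∃ z ∈ E, z 0 ≤ 0 :=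
  connected_set_reaches_left_general E hE hconn j k hjk x hxE hx1 y hyE hy1
end
end

section
/- Continuous majorant touching at a point of continuity: let (K,d) be a compact metric space, k : K → ℝ a bounded function, and x₀ ∈ K a point at which k is upper semicontinuous. Then there exists a continuous function ψ : K → ℝ such that ψ ≥ k on K and ψ(x₀) = k(x₀). -/
/-!
Take an upper bound `C` of `k`, put `c := C - k x₀ + 1`, and use upper semicontinuity to choose
radii `δ n ≤ 2⁻ⁿ` such that `k < k x₀ + c 2⁻⁽ⁿ⁺¹⁾` on the ball of radius `δ n` around `x₀`.
The majorant is `ψ x = k x₀ + ∑ₙ c 2⁻ⁿ min (d(x, x₀) / δ n) 1`, a uniformly convergent series of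
continuous ramps vanishing at `x₀`. If `δ (n + 1) ≤ d(x, x₀) < δ n`, the ramp of index `n + 1` is
saturated, so `ψ x ≥ k x₀ + c 2⁻⁽ⁿ⁺¹⁾ > k x`; if `d(x, x₀) ≥ δ 0`, the ramp of index `0` gives
`ψ x ≥ k x₀ + c > C`.
-/

noncomputable section
open Set Metric Filter Topology

lemma exists_succ_le_and_lt {α : Type*} [LinearOrder α] {u : ℕ → α} {t : α} (h₀ : t < u 0)
    (h : ∃ m, u m ≤ t) :
    ∃ n, u (n + 1) ≤ t ∧ t < u n := by
  classical
  have hfind : Nat.find h ≠ 0 := fun h' => (Nat.find_spec h).not_gt (h' ▸ h₀)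
  obtain ⟨n, hn⟩ := Nat.exists_eq_succ_of_ne_zero hfind
  exact ⟨n, by simpa [hn] using Nat.find_spec h, not_le.mp (Nat.find_min h (by omega))⟩

lemma UpperSemicontinuousAt.exists_pos_le_forall_dist_lt {X : Type*} [PseudoMetricSpace X]
    {k : X → ℝ} {x₀ : X} (hk : UpperSemicontinuousAt k x₀) {ε r : ℝ} (hε : 0 < ε) (hr : 0 < r) :
    ∃ δ, 0 < δ ∧ δ ≤ r ∧ ∀ x, dist x x₀ < δ → k x < k x₀ + ε := by
  obtain ⟨δ, hδ, hball⟩ := Metric.eventually_nhds_iff.mp (hk (k x₀ + ε) (by linarith))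
  exact ⟨min δ r, lt_min hδ hr, min_le_right _ _,
    fun x hx => hball (hx.trans_le (min_le_left _ _))⟩

section RampSeries

variable {X : Type*} [PseudoMetricSpace X] (x₀ : X) (w δ : ℕ → ℝ)

def rampSeries (x : X) : ℝ := ∑' n, w n * min (dist x x₀ / δ n) 1

variable {x₀ w δ}

lemma rampTerm_nonneg (hw : ∀ n, 0 ≤ w n) (hδ : ∀ n, 0 ≤ δ n) (n : ℕ) (x : X) :
    0 ≤ w n * min (dist x x₀ / δ n) 1 :=
  mul_nonneg (hw n) (le_min (div_nonneg dist_nonneg (hδ n)) zero_le_one)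

lemma norm_rampTerm_le (hw : ∀ n, 0 ≤ w n) (hδ : ∀ n, 0 ≤ δ n) (n : ℕ) (x : X) :
    ‖w n * min (dist x x₀ / δ n) 1‖ ≤ w n := by
  rw [Real.norm_of_nonneg (rampTerm_nonneg hw hδ n x)]
  exact mul_le_of_le_one_right (hw n) (min_le_right _ _)

lemma continuous_rampSeries (hws : Summable w) (hw : ∀ n, 0 ≤ w n) (hδ : ∀ n, 0 ≤ δ n) :
    Continuous (rampSeries x₀ w δ) :=
  continuous_tsum (fun n => by fun_prop) hws (norm_rampTerm_le hw hδ)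

@[simp]
lemma rampSeries_self : rampSeries x₀ w δ x₀ = 0 := by
  simp [rampSeries]

lemma le_rampSeries (hws : Summable w) (hw : ∀ n, 0 ≤ w n) (hδ : ∀ n, 0 ≤ δ n) {m : ℕ} {x : X}
    (hδm : 0 < δ m) (hm : δ m ≤ dist x x₀) : w m ≤ rampSeries x₀ w δ x := by
  have hsat : min (dist x x₀ / δ m) 1 = 1 := min_eq_right ((one_le_div hδm).mpr hm)
  have hsum : Summable fun n => w n * min (dist x x₀ / δ n) 1 :=
    hws.of_norm_bounded (norm_rampTerm_le hw hδ · x)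
  simpa [rampSeries, hsat] using hsum.le_tsum m fun n _ => rampTerm_nonneg hw hδ n x

end RampSeries

theorem exists_continuous_ge_eq_of_upperSemicontinuousAt {X : Type*} [MetricSpace X]
    {k : X → ℝ} (hk : BddAbove (range k)) {x₀ : X} (husc : UpperSemicontinuousAt k x₀) :
    ∃ ψ : X → ℝ, Continuous ψ ∧ k ≤ ψ ∧ ψ x₀ = k x₀ := by
  obtain ⟨C, hC⟩ := hk
  have hkC : ∀ x, k x ≤ C := fun x => hC (mem_range_self x)
  set c := C - k x₀ + 1
  have hc : 0 < c := by linarith [hkC x₀]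
  set w : ℕ → ℝ := fun n => c * (1 / 2) ^ n
  have hws : Summable w := (summable_geometric_two.mul_left c).congr fun n => by simp [w]
  have hwpos : ∀ n, 0 < w n := fun n => by positivity
  have hw : ∀ n, 0 ≤ w n := fun n => (hwpos n).le
  choose δ hδpos hδle hδ using fun n : ℕ =>
    husc.exists_pos_le_forall_dist_lt (hwpos (n + 1)) (by positivity : (0 : ℝ) < (1 / 2) ^ n)
  refine ⟨fun x => k x₀ + rampSeries x₀ w δ x,
    continuous_const.add (continuous_rampSeries hws hw fun n => (hδpos n).le), fun x => ?_, by simp⟩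
  obtain rfl | hx := eq_or_ne x x₀
  · simp
  obtain ⟨m, hm, hkm⟩ : ∃ m, δ m ≤ dist x x₀ ∧ k x ≤ k x₀ + w m := by
    rcases le_or_gt (δ 0) (dist x x₀) with hfar | hnear
    · exact ⟨0, hfar, by simp only [w, c, pow_zero, mul_one]; linarith [hkC x]⟩
    · have hsmall : ∃ m, δ m ≤ dist x x₀ := by
        obtain ⟨m, hm⟩ := exists_pow_lt_of_lt_one (dist_pos.mpr hx) (by norm_num : (1 / 2 : ℝ) < 1)
        exact ⟨m, (hδle m).trans hm.le⟩
      obtain ⟨n, hn₁, hn⟩ := exists_succ_le_and_lt hnear hsmall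
      exact ⟨n + 1, hn₁, (hδ n x hn).le⟩
  linarith [le_rampSeries hws hw (fun n => (hδpos n).le) (hδpos m) hm]

theorem continuous_majorant_touching_general {K : Type*} [MetricSpace K]
    (k : K → ℝ) (hbdd : ∃ M : ℝ, ∀ x, |k x| ≤ M) (x₀ : K)
    (husc : UpperSemicontinuousAt k x₀) :
    ∃ ψ : K → ℝ, Continuous ψ ∧ (∀ x, k x ≤ ψ x) ∧ ψ x₀ = k x₀ := by
  obtain ⟨M, hM⟩ := hbdd
  have hk : BddAbove (range k) := ⟨M, forall_mem_range.mpr fun x => (le_abs_self _).trans (hM x)⟩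
  exact exists_continuous_ge_eq_of_upperSemicontinuousAt hk husc

theorem continuous_majorant_touching {K : Type*} [MetricSpace K] [CompactSpace K]
    (k : K → ℝ) (hbdd : ∃ M : ℝ, ∀ x, |k x| ≤ M) (x₀ : K)
    (husc : UpperSemicontinuousAt k x₀) :
    ∃ ψ : K → ℝ, Continuous ψ ∧ (∀ x, k x ≤ ψ x) ∧ ψ x₀ = k x₀ :=
  continuous_majorant_touching_general k hbdd x₀ husc
end
end
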